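/- Let U ∈ C¹(ℝ^d, ℝ) and let l : ℝ^d → ℝ^d be continuous with ⟨∇U(x), l(x)⟩ = 0 for all x ∈ ℝ^d, and set b(x) = −∇U(x) + l(x). Then the quasipotential of the system dx/dt = b(x) with additive noise satisfies 𝕍(X, Y) ≥ 2(U(Y) − U(X)) for all X, Y ∈ ℝ^d. -/

import Mathlib

open MeasureTheory
open scoped RealInnerProductSpace ENNReal

/-- The Freidlin–Wentzell action `I_x^T(φ) = (1/2)∫₀ᵀ‖φ'(t) − b(φ(t))‖² dt` for
absolutely continuous `φ` with square-integrable derivative and `φ(0) = x`,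
and `+∞` otherwise (as `sInf ∅ = ⊤`). -/
noncomputable def action1 {d : ℕ} (b : EuclideanSpace ℝ (Fin d) → EuclideanSpace ℝ (Fin d))
    (T : ℝ) (x : EuclideanSpace ℝ (Fin d)) (φ : ℝ → EuclideanSpace ℝ (Fin d)) : ℝ≥0∞ :=
  sInf { c : ℝ≥0∞ | ∃ g : ℝ → EuclideanSpace ℝ (Fin d),
    MemLp g 2 (volume.restrict (Set.Icc 0 T)) ∧
    φ 0 = x ∧
    (∀ t ∈ Set.Icc 0 T, φ t = x + ∫ s in Set.Ioc 0 t, g s) ∧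
    c = ENNReal.ofReal ((1 / 2) * ∫ t in Set.Ioc 0 T, ‖g t - b (φ t)‖ ^ 2) }

/-- The quasipotential `𝕍(X,Y) = inf { I_X^T(φ) : T > 0, φ(0) = X, φ(T) = Y }`. -/
noncomputable def quasipotential1 {d : ℕ}
    (b : EuclideanSpace ℝ (Fin d) → EuclideanSpace ℝ (Fin d))
    (X Y : EuclideanSpace ℝ (Fin d)) : ℝ≥0∞ :=
  sInf { c : ℝ≥0∞ | ∃ T > (0:ℝ), ∃ φ : ℝ → EuclideanSpace ℝ (Fin d),
    φ 0 = X ∧ φ T = Y ∧ c = action1 b T X φ }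


private lemma inner_le_quarter_sq {d : ℕ} (v w u : EuclideanSpace ℝ (Fin d))
    (h : ⟪v, w⟫ = 0) : ⟪v, u⟫ ≤ (1/4) * ‖u - (-v + w)‖ ^ 2 := by
  have key : u = (u - (-v + w)) + (-v + w) := by abel
  set a := u - (-v + w) with ha
  have h1 : ⟪v, u⟫ = ⟪v, a⟫ - ‖v‖ ^ 2 + ⟪v, w⟫ := by
    rw [key, inner_add_right, inner_add_right, inner_neg_right, real_inner_self_eq_norm_sq]
    ring
  have h2 : ⟪v, a⟫ ≤ ‖v‖ * ‖a‖ := real_inner_le_norm v a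
  have h3 : (0:ℝ) ≤ ‖v‖ := norm_nonneg _
  nlinarith [sq_nonneg (‖v‖ - ‖a‖/2)]

set_option maxHeartbeats 1000000 in
private lemma quasi_key {d : ℕ} (U : EuclideanSpace ℝ (Fin d) → ℝ) (hU : ContDiff ℝ 1 U)
    (l : EuclideanSpace ℝ (Fin d) → EuclideanSpace ℝ (Fin d)) (hl : Continuous l)
    (horth : ∀ x, ⟪gradient U x, l x⟫ = 0)
    (T : ℝ) (hT : 0 < T) (X : EuclideanSpace ℝ (Fin d))
    (g φ : ℝ → EuclideanSpace ℝ (Fin d))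
    (hg2 : MemLp g 2 (volume.restrict (Set.Icc 0 T)))
    (hφ : ∀ t ∈ Set.Icc 0 T, φ t = X + ∫ s in Set.Ioc 0 t, g s) :
    U (φ T) - U X ≤
      (1/4) * ∫ t in Set.Ioc 0 T, ‖g t - (-gradient U (φ t) + l (φ t))‖ ^ 2 := by
  haveI : Fact (volume (Set.Icc (0:ℝ) T) < ⊤) := ⟨measure_Icc_lt_top⟩
  haveI : Fact (volume (Set.Ioc (0:ℝ) T) < ⊤) := ⟨measure_Ioc_lt_top⟩
  haveI : (volume.restrict (Set.Icc (0:ℝ) T)).Regular :=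
    MeasureTheory.Measure.Regular.restrict_of_measure_ne_top measure_Icc_lt_top.ne
  have hg1 : IntegrableOn g (Set.Icc 0 T) volume := hg2.integrable one_le_two
  have hresle : volume.restrict (Set.Ioc (0:ℝ) T) ≤ volume.restrict (Set.Icc (0:ℝ) T) :=
    Measure.restrict_mono Set.Ioc_subset_Icc_self le_rfl
  have hg2' : MemLp g 2 (volume.restrict (Set.Ioc 0 T)) := hg2.mono_measure hresle
  have hg1' : IntegrableOn g (Set.Ioc 0 T) volume := hg1.mono_set Set.Ioc_subset_Icc_self
  have hgrad : Continuous (gradient U) := by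
    have h : Continuous (fderiv ℝ U) := hU.continuous_fderiv one_ne_zero
    exact (InnerProductSpace.toDual ℝ _).symm.continuous.comp h
  have φcont : ContinuousOn φ (Set.Icc 0 T) :=
    (continuousOn_const.add (intervalIntegral.continuousOn_primitive hg1)).congr hφ
  have φmble : AEStronglyMeasurable φ (volume.restrict (Set.Ioc 0 T)) :=
    (φcont.aestronglyMeasurable measurableSet_Icc).mono_measure hresle
  have hTmem : T ∈ Set.Icc 0 T := Set.right_mem_Icc.2 hT.le
  set C := φ '' Set.Icc 0 T with hCdef
  have hC : IsCompact C := isCompact_Icc.image_of_continuousOn φcont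
  set K := Metric.cthickening 1 C with hKdef
  have hK : IsCompact K := hC.cthickening
  have hCK : C ⊆ K := Metric.self_subset_cthickening _
  obtain ⟨M0, hM0⟩ := hK.exists_bound_of_continuousOn hgrad.continuousOn
  set M := max M0 0 with hMdef
  have hMnn : (0:ℝ) ≤ M := le_max_right _ _
  have hM : ∀ x ∈ K, ‖gradient U x‖ ≤ M := fun x hx => (hM0 x hx).trans (le_max_left _ _)
  have hφC : ∀ t ∈ Set.Ioc (0:ℝ) T, φ t ∈ C := fun t ht =>
    Set.mem_image_of_mem φ (Set.Ioc_subset_Icc_self ht)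
  have hφC' : ∀ t ∈ Set.Icc (0:ℝ) T, φ t ∈ C := fun t ht => Set.mem_image_of_mem φ ht
  -- integrability of the inner product term
  have hinner_meas : AEStronglyMeasurable (fun t => ⟪gradient U (φ t), g t⟫)
      (volume.restrict (Set.Ioc 0 T)) :=
    (hgrad.comp_aestronglyMeasurable φmble).inner hg2'.aestronglyMeasurable
  have hinner_int : Integrable (fun t => ⟪gradient U (φ t), g t⟫)
      (volume.restrict (Set.Ioc 0 T)) := by
    refine Integrable.mono' (hg1'.norm.const_mul M) hinner_meas ?_
    filter_upwards [ae_restrict_mem measurableSet_Ioc] with t ht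
    calc ‖⟪gradient U (φ t), g t⟫‖ ≤ ‖gradient U (φ t)‖ * ‖g t‖ := by
          rw [Real.norm_eq_abs]; exact abs_real_inner_le_norm _ _
      _ ≤ M * ‖g t‖ :=
          mul_le_mul_of_nonneg_right (hM _ (hCK (hφC t ht))) (norm_nonneg _)
  -- integrability of the squared norm term
  have hbφcont : Continuous (fun x => -gradient U x + l x) := hgrad.neg.add hl
  obtain ⟨Mb, hMb⟩ := hC.exists_bound_of_continuousOn hbφcont.continuousOn
  have hbφ2 : MemLp (fun t => -gradient U (φ t) + l (φ t)) 2
      (volume.restrict (Set.Ioc 0 T)) := by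
    refine MemLp.of_bound (hbφcont.comp_aestronglyMeasurable φmble) Mb ?_
    filter_upwards [ae_restrict_mem measurableSet_Ioc] with t ht
    exact hMb _ (hφC t ht)
  have hdiff2 : MemLp (fun t => g t - (-gradient U (φ t) + l (φ t))) 2
      (volume.restrict (Set.Ioc 0 T)) := hg2'.sub hbφ2
  have hsq_int : Integrable (fun t => ‖g t - (-gradient U (φ t) + l (φ t))‖ ^ 2)
      (volume.restrict (Set.Ioc 0 T)) := by
    have h := hdiff2.integrable_norm_rpow two_ne_zero ENNReal.ofNat_ne_top
    refine h.congr (Filter.Eventually.of_forall fun t => ?_)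
    simp only [ENNReal.toReal_ofNat]
    rw [show ((2:ℝ)) = ((2:ℕ):ℝ) by norm_num, Real.rpow_natCast]
  -- the pointwise inequality and its integrated form
  have hJle : (∫ t in Set.Ioc 0 T, ⟪gradient U (φ t), g t⟫) ≤
      (1/4) * ∫ t in Set.Ioc 0 T, ‖g t - (-gradient U (φ t) + l (φ t))‖ ^ 2 := by
    have := setIntegral_mono_on hinner_int (hsq_int.const_mul (1/4)) measurableSet_Ioc
      (fun t _ => inner_le_quarter_sq (gradient U (φ t)) (l (φ t)) (g t) (horth (φ t)))
    rwa [integral_const_mul] at this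
  -- ε-argument
  refine le_of_forall_pos_le_add fun ε hε => ?_
  set Ig := ∫ t in Set.Icc 0 T, ‖g t‖ with hIgdef
  have hIg0 : 0 ≤ Ig := setIntegral_nonneg measurableSet_Icc fun t _ => norm_nonneg _
  set εA := ε / (3 * (Ig + 1)) with hεAdef
  have hεA : 0 < εA := by positivity
  have huc := hK.uniformContinuousOn_of_continuous hgrad.continuousOn
  rw [Metric.uniformContinuousOn_iff] at huc
  obtain ⟨δ₁, hδ₁pos, hδ₁⟩ := huc εA hεA
  have hcontat : ContinuousAt U (φ T) := hU.continuous.continuousAt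
  rw [Metric.continuousAt_iff] at hcontat
  obtain ⟨δ₂, hδ₂pos, hδ₂⟩ := hcontat (ε/3) (by positivity)
  set η := min (min 1 (ε / (3 * (M + 1)))) (min δ₁ δ₂) / 2 with hηdef
  have hηpos : 0 < η := by
    have h1 : (0:ℝ) < ε / (3 * (M + 1)) := by positivity
    have := lt_min (lt_min one_pos h1) (lt_min hδ₁pos hδ₂pos)
    rw [hηdef]; linarith
  have hmm1 : min (min 1 (ε / (3 * (M + 1)))) (min δ₁ δ₂) ≤ 1 :=
    le_trans (min_le_left _ _) (min_le_left _ _)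
  have hmm2 : min (min 1 (ε / (3 * (M + 1)))) (min δ₁ δ₂) ≤ ε / (3 * (M + 1)) :=
    le_trans (min_le_left _ _) (min_le_right _ _)
  have hmm3 : min (min 1 (ε / (3 * (M + 1)))) (min δ₁ δ₂) ≤ δ₁ :=
    le_trans (min_le_right _ _) (min_le_left _ _)
  have hmm4 : min (min 1 (ε / (3 * (M + 1)))) (min δ₁ δ₂) ≤ δ₂ :=
    le_trans (min_le_right _ _) (min_le_right _ _)
  have hη1 : η ≤ 1 := by rw [hηdef]; linarith
  have hηδ₁ : η < δ₁ := by rw [hηdef]; linarith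
  have hηδ₂ : η < δ₂ := by rw [hηdef]; linarith
  have hηM : M * η ≤ ε / 3 := by
    have h1 : η ≤ ε / (3 * (M + 1)) := by rw [hηdef]; linarith
    have h2 : M * η ≤ M * (ε / (3 * (M + 1))) := mul_le_mul_of_nonneg_left h1 hMnn
    have h3 : M * (ε / (3 * (M + 1))) ≤ ε / 3 := by
      rw [mul_comm, div_mul_eq_mul_div, div_le_div_iff₀ (by positivity) (by norm_num : (0:ℝ) < 3)]
      nlinarith
    linarith
  -- continuous approximation of g
  obtain ⟨g', -, hg'close, hg'cont, -⟩ := hg1.exists_hasCompactSupport_integral_sub_le hηpos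
  set ψ : ℝ → EuclideanSpace ℝ (Fin d) := fun t => X + ∫ s in (0:ℝ)..t, g' s with hψdef
  have hψd : ∀ t, HasDerivAt ψ (g' t) t := fun t =>
    (intervalIntegral.integral_hasDerivAt_right (hg'cont.intervalIntegrable 0 t)
      (hg'cont.stronglyMeasurableAtFilter volume (nhds t)) hg'cont.continuousAt).const_add X
  have hψcont : Continuous ψ := continuous_iff_continuousAt.2 fun t => (hψd t).continuousAt
  have hψ0 : ψ 0 = X := by simp [hψdef]
  have hchain : ∀ t, HasDerivAt (fun s => U (ψ s)) ⟪gradient U (ψ t), g' t⟫ t := by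
    intro t
    have h1 : HasFDerivAt U (fderiv ℝ U (ψ t)) (ψ t) :=
      (hU.differentiable one_ne_zero (ψ t)).hasFDerivAt
    have h2 := h1.comp_hasDerivAt t (hψd t)
    rwa [show fderiv ℝ U (ψ t) (g' t) = ⟪gradient U (ψ t), g' t⟫ by
      rw [gradient, InnerProductSpace.toDual_symm_apply]] at h2
  have hnormdiff_int : IntegrableOn (fun s => ‖g s - g' s‖) (Set.Icc 0 T) volume :=
    (hg1.sub hg'cont.integrableOn_Icc).norm
  have hclose_le : ∀ t ∈ Set.Icc (0:ℝ) T, ‖ψ t - φ t‖ ≤ η := by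
    intro t ht
    have hsub : Set.Ioc (0:ℝ) t ⊆ Set.Icc (0:ℝ) T := fun s hs => ⟨hs.1.le, hs.2.trans ht.2⟩
    have h1 : ψ t - φ t = ∫ s in Set.Ioc 0 t, (g' s - g s) := by
      rw [hφ t ht]
      show X + (∫ s in (0:ℝ)..t, g' s) - (X + ∫ s in Set.Ioc 0 t, g s) = _
      rw [intervalIntegral.integral_of_le ht.1,
        integral_sub hg'cont.integrableOn_Ioc (hg1.mono_set hsub)]
      abel
    rw [h1]
    calc ‖∫ s in Set.Ioc 0 t, (g' s - g s)‖ ≤ ∫ s in Set.Ioc 0 t, ‖g' s - g s‖ :=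
          norm_integral_le_integral_norm _
      _ = ∫ s in Set.Ioc 0 t, ‖g s - g' s‖ := by simp only [norm_sub_rev]
      _ ≤ ∫ s in Set.Icc 0 T, ‖g s - g' s‖ :=
          setIntegral_mono_set hnormdiff_int
            (Filter.Eventually.of_forall fun s => norm_nonneg _)
            (HasSubset.Subset.eventuallyLE hsub)
      _ ≤ η := hg'close
  have hψK : ∀ t ∈ Set.Icc (0:ℝ) T, ψ t ∈ K := fun t ht =>
    Metric.mem_cthickening_of_dist_le (ψ t) (φ t) 1 C (hφC' t ht)
      (by rw [dist_eq_norm]; exact (hclose_le t ht).trans hη1)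
  have hgradnear : ∀ t ∈ Set.Icc (0:ℝ) T, ‖gradient U (ψ t) - gradient U (φ t)‖ ≤ εA := by
    intro t ht
    have := hδ₁ (ψ t) (hψK t ht) (φ t) (hCK (hφC' t ht))
      (by rw [dist_eq_norm]; exact lt_of_le_of_lt (hclose_le t ht) hηδ₁)
    rw [dist_eq_norm] at this
    exact this.le
  have hftc : (∫ t in (0:ℝ)..T, ⟪gradient U (ψ t), g' t⟫) = U (ψ T) - U (ψ 0) :=
    intervalIntegral.integral_eq_sub_of_hasDerivAt (fun t _ => hchain t)
      (((hgrad.comp hψcont).inner hg'cont).intervalIntegrable 0 T)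
  set Jψ := ∫ t in Set.Ioc 0 T, ⟪gradient U (ψ t), g' t⟫ with hJψdef
  set Jφ := ∫ t in Set.Ioc 0 T, ⟪gradient U (φ t), g t⟫ with hJφdef
  have hJψ : U (ψ T) - U X = Jψ := by
    rw [hJψdef, ← intervalIntegral.integral_of_le hT.le, hftc, hψ0]
  have hUψφ : U (φ T) - U (ψ T) ≤ ε / 3 := by
    have h := hδ₂ (show dist (ψ T) (φ T) < δ₂ by
      rw [dist_eq_norm]; exact lt_of_le_of_lt (hclose_le T hTmem) hηδ₂)
    rw [Real.dist_eq] at h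
    have := abs_lt.1 h
    linarith
  have hint_ψIoc : IntegrableOn (fun t => ⟪gradient U (ψ t), g' t⟫) (Set.Ioc 0 T) volume :=
    ((hgrad.comp hψcont).inner hg'cont).integrableOn_Ioc
  have hdiffint1 : IntegrableOn (fun t => ‖g' t - g t‖) (Set.Ioc 0 T) volume :=
    (hg'cont.integrableOn_Ioc.sub hg1').norm
  have hJdiff : Jψ - Jφ ≤ ε / 3 + ε / 3 := by
    have hsplit : Jψ - Jφ =
        ∫ t in Set.Ioc 0 T, (⟪gradient U (ψ t), g' t⟫ - ⟪gradient U (φ t), g t⟫) :=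
      (integral_sub hint_ψIoc hinner_int).symm
    have hptb : ∀ t ∈ Set.Ioc (0:ℝ) T,
        ⟪gradient U (ψ t), g' t⟫ - ⟪gradient U (φ t), g t⟫ ≤
          M * ‖g' t - g t‖ + εA * ‖g t‖ := by
      intro t ht
      have htI : t ∈ Set.Icc (0:ℝ) T := Set.Ioc_subset_Icc_self ht
      have hsplit2 : ⟪gradient U (ψ t), g' t⟫ - ⟪gradient U (φ t), g t⟫ =
          ⟪gradient U (ψ t), g' t - g t⟫ + ⟪gradient U (ψ t) - gradient U (φ t), g t⟫ := by
        rw [inner_sub_right, inner_sub_left]; ring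
      have h1 : ⟪gradient U (ψ t), g' t - g t⟫ ≤ M * ‖g' t - g t‖ :=
        le_trans (real_inner_le_norm _ _)
          (mul_le_mul_of_nonneg_right (hM _ (hψK t htI)) (norm_nonneg _))
      have h2 : ⟪gradient U (ψ t) - gradient U (φ t), g t⟫ ≤ εA * ‖g t‖ :=
        le_trans (real_inner_le_norm _ _)
          (mul_le_mul_of_nonneg_right (hgradnear t htI) (norm_nonneg _))
      linarith [hsplit2, h1, h2]
    have hbound_int : Integrable (fun t => M * ‖g' t - g t‖ + εA * ‖g t‖)
        (volume.restrict (Set.Ioc 0 T)) := (hdiffint1.const_mul M).add (hg1'.norm.const_mul εA)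
    have hsubint : IntegrableOn
        (fun t => ⟪gradient U (ψ t), g' t⟫ - ⟪gradient U (φ t), g t⟫) (Set.Ioc 0 T) volume :=
      hint_ψIoc.sub hinner_int
    have hle := setIntegral_mono_on hsubint hbound_int measurableSet_Ioc hptb
    have heq : (∫ t in Set.Ioc 0 T, (M * ‖g' t - g t‖ + εA * ‖g t‖)) =
        M * (∫ t in Set.Ioc 0 T, ‖g' t - g t‖) + εA * ∫ t in Set.Ioc 0 T, ‖g t‖ := by
      rw [integral_add (hdiffint1.const_mul M) (hg1'.norm.const_mul εA),
        integral_const_mul, integral_const_mul]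
    have hgg' : (∫ t in Set.Ioc 0 T, ‖g' t - g t‖) ≤ η := by
      calc (∫ t in Set.Ioc 0 T, ‖g' t - g t‖) = ∫ t in Set.Ioc 0 T, ‖g t - g' t‖ := by
            simp only [norm_sub_rev]
        _ ≤ ∫ t in Set.Icc 0 T, ‖g t - g' t‖ :=
            setIntegral_mono_set hnormdiff_int
              (Filter.Eventually.of_forall fun s => norm_nonneg _)
              (HasSubset.Subset.eventuallyLE Set.Ioc_subset_Icc_self)
        _ ≤ η := hg'close
    have hgI : (∫ t in Set.Ioc 0 T, ‖g t‖) ≤ Ig :=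
      setIntegral_mono_set hg1.norm (Filter.Eventually.of_forall fun s => norm_nonneg _)
        (HasSubset.Subset.eventuallyLE Set.Ioc_subset_Icc_self)
    have hεAIg : εA * (∫ t in Set.Ioc 0 T, ‖g t‖) ≤ ε / 3 := by
      have h1 : εA * (∫ t in Set.Ioc 0 T, ‖g t‖) ≤ εA * Ig :=
        mul_le_mul_of_nonneg_left hgI hεA.le
      have h2 : εA * Ig ≤ εA * (Ig + 1) := by nlinarith
      have h3 : εA * (Ig + 1) = ε / 3 := by
        rw [hεAdef]; field_simp
      linarith
    have hMη : M * (∫ t in Set.Ioc 0 T, ‖g' t - g t‖) ≤ ε / 3 := by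
      have hnn : 0 ≤ ∫ t in Set.Ioc 0 T, ‖g' t - g t‖ :=
        setIntegral_nonneg measurableSet_Ioc fun t _ => norm_nonneg _
      have := mul_le_mul_of_nonneg_left hgg' hMnn
      linarith
    rw [hsplit]
    calc (∫ t in Set.Ioc 0 T, (⟪gradient U (ψ t), g' t⟫ - ⟪gradient U (φ t), g t⟫))
        ≤ ∫ t in Set.Ioc 0 T, (M * ‖g' t - g t‖ + εA * ‖g t‖) := hle
      _ = M * (∫ t in Set.Ioc 0 T, ‖g' t - g t‖) + εA * ∫ t in Set.Ioc 0 T, ‖g t‖ := heq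
      _ ≤ ε / 3 + ε / 3 := add_le_add hMη hεAIg
  calc U (φ T) - U X = (U (φ T) - U (ψ T)) + (U (ψ T) - U X) := by ring
    _ ≤ ε / 3 + Jψ := by linarith [hUψφ, hJψ.le, hJψ.ge]
    _ ≤ ε / 3 + (Jφ + (ε / 3 + ε / 3)) := by linarith [hJdiff]
    _ ≤ (1/4) * (∫ t in Set.Ioc 0 T, ‖g t - (-gradient U (φ t) + l (φ t))‖ ^ 2) + ε := by
        linarith [hJle]

/-- For `b = −∇U + l` with `⟨∇U, l⟩ ≡ 0`, the quasipotential satisfies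
`𝕍(X,Y) ≥ 2(U(Y) − U(X))`. -/
theorem quasipotential_ge_two_potential_difference
    (d : ℕ)
    (U : EuclideanSpace ℝ (Fin d) → ℝ) (hU : ContDiff ℝ 1 U)
    (l : EuclideanSpace ℝ (Fin d) → EuclideanSpace ℝ (Fin d)) (hl : Continuous l)
    (horth : ∀ x, ⟪gradient U x, l x⟫ = 0)
    (X Y : EuclideanSpace ℝ (Fin d)) :
    ENNReal.ofReal (2 * (U Y - U X))
      ≤ quasipotential1 (fun x => -gradient U x + l x) X Y := by
  unfold quasipotential1
  refine le_sInf ?_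
  rintro c ⟨T, hT, φ, hφ0, hφT, rfl⟩
  unfold action1
  refine le_sInf ?_
  rintro c ⟨g, hg2, hx0, hφeq, rfl⟩
  refine ENNReal.ofReal_le_ofReal ?_
  have hk := quasi_key U hU l hl horth T hT X g φ hg2 hφeq
  rw [hφT] at hk
  show 2 * (U Y - U X) ≤
    (1 / 2) * ∫ t in Set.Ioc 0 T, ‖g t - (-gradient U (φ t) + l (φ t))‖ ^ 2
  linarith
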